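/- arXiv:1402.1333 — 3 statements merged into one kernel-verified Lean document; each statement's English description precedes it below -/
import Mathlib

section
/- In characteristic p, the Euler operator θ_{p^e} = t^{p^e} ∂_t^{[p^e]} on R[t] satisfies Π_{j=0}^{p-1} (θ_{p^e} + j) = 0 as an endomorphism of R[t]. -/
open Polynomial

/-- The divided power operator `∂_t^[m]` on `R[t]` (the `m`-th Hasse derivative). -/
noncomputable def divPow (R : Type*) [CommRing R] (m : ℕ) : Module.End R (Polynomial R) :=
  Polynomial.hasseDeriv m

/-- The divided power Euler operator `θ_m = t^m ∂_t^[m]` on `R[t]`,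
sending `t^n` to `C(n,m) t^n`. -/
noncomputable def thetaOp (R : Type*) [CommRing R] (m : ℕ) : Module.End R (Polynomial R) :=
  (LinearMap.mulLeft R (Polynomial.X ^ m)) * divPow R m

/-!
`θ_m` acts on `t^n` as the scalar `c = C(n, m)`, so `∏_{j<p} (θ_m + j)` acts on `t^n` as
`c (c + 1) ⋯ (c + p - 1)`. A product of `p` consecutive integers is divisible by `p!`,
hence by `p`, so it vanishes in characteristic `p`.
-/

lemma thetaOp_monomial (R : Type*) [CommRing R] (m n : ℕ) (a : R) :
    thetaOp R m (monomial n a) = monomial n ((n.choose m : R) * a) := by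
  simp only [thetaOp, divPow, Module.End.mul_apply, hasseDeriv_monomial,
    LinearMap.mulLeft_apply]
  rcases le_or_gt m n with h | h
  · rw [X_pow_mul, monomial_mul_X_pow, Nat.sub_add_cancel h]
  · simp [Nat.choose_eq_zero_of_lt h]

lemma prod_map_thetaOp_add_natCast_monomial (R : Type*) [CommRing R] (m : ℕ) (L : List ℕ)
    (n : ℕ) (a : R) :
    (L.map (fun j : ℕ => thetaOp R m + (j : Module.End R R[X]))).prod (monomial n a) =
      monomial n ((((L.map (n.choose m + ·)).prod : ℕ) : R) * a) := by
  induction L with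
  | nil => simp
  | cons j L ih =>
    simp only [List.map_cons, List.prod_cons, Module.End.mul_apply, ih, LinearMap.add_apply,
      thetaOp_monomial, Module.End.natCast_apply, nsmul_eq_mul, ← C_eq_natCast, C_mul_monomial,
      ← (monomial n).map_add]
    congr 1
    push_cast
    ring

lemma List.prod_map_range_add_eq_ascFactorial (c n : ℕ) :
    ((List.range n).map (c + ·)).prod = c.ascFactorial n := by
  rw [Nat.ascFactorial_eq_prod_range, Finset.prod_eq_multiset_prod, Finset.range_val,
    Multiset.range, Multiset.map_coe, Multiset.prod_coe]

lemma List.dvd_prod_map_range_add {n : ℕ} (hn : 0 < n) (c : ℕ) :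
    n ∣ ((List.range n).map (c + ·)).prod := by
  rw [List.prod_map_range_add_eq_ascFactorial]
  exact (Nat.dvd_factorial hn le_rfl).trans (Nat.factorial_dvd_ascFactorial c n)

/-- In characteristic `p`, the Euler operator `θ_{p^e} = t^{p^e} ∂_t^[p^e]` on `R[t]`
satisfies `∏_{j=0}^{p-1} (θ_{p^e} + j) = 0` as an endomorphism of `R[t]`. -/
theorem prod_theta_add_const_eq_zero (R : Type*) [CommRing R] (p : ℕ) [Fact p.Prime]
    [CharP R p] (e : ℕ) :
    (((List.range p).map
        (fun j : ℕ => thetaOp R (p ^ e) + (j : Module.End R (Polynomial R)))).prod) = 0 := by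
  refine lhom_ext' fun n => LinearMap.ext fun a => ?_
  have hvanish : (((List.range p).map (n.choose (p ^ e) + ·)).prod : R) = 0 :=
    (CharP.cast_eq_zero_iff R p _).mpr (List.dvd_prod_map_range_add (Fact.out : p.Prime).pos _)
  simp only [LinearMap.comp_apply, LinearMap.zero_apply, prod_map_thetaOp_add_natCast_monomial,
    hvanish, zero_mul, monomial_zero_right]
end

section
/- Let I be a directed index set and (M_i), (N_i), (R_i) directed systems where each R_i is a commutative ring, M_i and N_i are R_i-modules, and the transition maps are compatible. Then there is a natural isomorphism colim_i (M_i ⊗_{R_i} N_i) ≅ (colim_i M_i) ⊗_{colim_i R_i} (colim_i N_i). -/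
/-!
The forward map sends `of i (m ⊗ n)` to `of i m ⊗ of i n`: it is compatible with the transition
maps because those of the tensor system are tensor products of those of `M` and `N`, and it is
`R i`-balanced because the `S`-actions on the colimits extend the `R i`-actions. The inverse comes
from the biadditive map `(of i m, of j n) ↦ of k (m ⊗ n)`, computed at any common upper bound `k`;
it is `S`-balanced because a scalar and two vectors of the colimits all come from a single stage.
-/

open TensorProduct

namespace TensorProduct

variable (R : Type*) [CommSemiring R] {A B M N : Type*} [AddCommMonoid A] [AddCommMonoid B]
  [AddCommMonoid M] [AddCommMonoid N] [Module R M] [Module R N]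

noncomputable def tmulHom (f : A →+ M) (g : B →+ N) : A →+ B →+ M ⊗[R] N :=
  ((LinearMap.toAddMonoidHom'.comp (mk R M N).toAddMonoidHom).comp f).compl₂ g

@[simp]
theorem tmulHom_apply (f : A →+ M) (g : B →+ N) (a : A) (b : B) :
    tmulHom R f g a b = f a ⊗ₜ g b := rfl

end TensorProduct

namespace AddCommGroup.DirectLimit

variable {ι : Type*} [Preorder ι] [DecidableEq ι]
  {G H : ι → Type*} [∀ i, AddCommMonoid (G i)] [∀ i, AddCommMonoid (H i)]
  {f : ∀ i j, i ≤ j → G i →+ G j} {f' : ∀ i j, i ≤ j → H i →+ H j}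
  {P : Type*} [AddCommMonoid P] (g : ∀ i j, G i →+ H j →+ P)
  (hg : ∀ i i' j (h : i ≤ i') x y, g i' j (f i i' h x) y = g i j x y)
  (hg' : ∀ i j j' (h : j ≤ j') x y, g i j' x (f' j j' h y) = g i j x y)

noncomputable def lift₂ : DirectLimit G f →+ DirectLimit H f' →+ P :=
  lift G f _
    (fun i => (lift H f' _ (fun j => (g i j).flip)
      fun j j' h y => AddMonoidHom.ext fun x => hg' i j j' h x y).flip)
    fun i i' h x => by
      ext j y
      simp [hg]

@[simp]
theorem lift₂_of_of (i j x y) : lift₂ g hg hg' (of G f i x) (of H f' j y) = g i j x y := by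
  simp [lift₂]

end AddCommGroup.DirectLimit

namespace DirectLimitTensorProduct

open AddCommGroup.DirectLimit

section UpperBound

variable {ι : Type*} [Preorder ι] [IsDirectedOrder ι]

noncomputable def ub (i j : ι) : ι := (exists_ge_ge i j).choose

theorem le_ub_left (i j : ι) : i ≤ ub i j := (exists_ge_ge i j).choose_spec.1

theorem le_ub_right (i j : ι) : j ≤ ub i j := (exists_ge_ge i j).choose_spec.2

end UpperBound

section Semiring

variable {ι : Type*} [Preorder ι] [DecidableEq ι] {R : ι → Type*} [∀ i, CommSemiring (R i)]
  {M N : ι → Type*} [∀ i, AddCommMonoid (M i)] [∀ i, AddCommMonoid (N i)]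
  [∀ i, Module (R i) (M i)] [∀ i, Module (R i) (N i)]
  {fM : ∀ i j, i ≤ j → M i →+ M j} {fN : ∀ i j, i ≤ j → N i →+ N j}
  {fT : ∀ i j, i ≤ j → M i ⊗[R i] N i →+ M j ⊗[R j] N j}

local notation "T∞" => AddCommGroup.DirectLimit (fun i => M i ⊗[R i] N i) fT
local notation "M∞" => AddCommGroup.DirectLimit M fM
local notation "N∞" => AddCommGroup.DirectLimit N fN

variable (fM fN fT) in
noncomputable def tmulAt {i j k : ι} (hi : i ≤ k) (hj : j ≤ k) : M i →+ N j →+ T∞ :=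
  (tmulHom (R k) (fM i k hi) (fN j k hj)).compr₂ (of _ fT k)

theorem tmulAt_apply {i j k : ι} (hi : i ≤ k) (hj : j ≤ k) (m : M i) (n : N j) :
    tmulAt fM fN fT hi hj m n = of _ fT k (fM i k hi m ⊗ₜ fN j k hj n) := rfl

theorem tmulAt_map_left [DirectedSystem M fun i j h => fM i j h] {i i' j k : ι} (h : i ≤ i')
    (hi' : i' ≤ k) (hj : j ≤ k) (m : M i) (n : N j) :
    tmulAt fM fN fT hi' hj (fM i i' h m) n = tmulAt fM fN fT (h.trans hi') hj m n := by
  simp only [tmulAt_apply, DirectedSystem.map_map (f := fun i j h => fM i j h)]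

theorem tmulAt_map_right [DirectedSystem N fun i j h => fN i j h] {i j j' k : ι} (h : j ≤ j')
    (hi : i ≤ k) (hj' : j' ≤ k) (m : M i) (n : N j) :
    tmulAt fM fN fT hi hj' m (fN j j' h n) = tmulAt fM fN fT hi (h.trans hj') m n := by
  simp only [tmulAt_apply, DirectedSystem.map_map (f := fun i j h => fN i j h)]

variable [DirectedSystem M fun i j h => fM i j h] [DirectedSystem N fun i j h => fN i j h]
  [IsDirectedOrder ι]
  (hT : ∀ i j (h : i ≤ j) (m : M i) (n : N i), fT i j h (m ⊗ₜ n) = fM i j h m ⊗ₜ fN i j h n)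

include hT in
theorem tmulAt_eq {i j k k' : ι} (hik : i ≤ k) (hjk : j ≤ k) (hik' : i ≤ k') (hjk' : j ≤ k')
    (m : M i) (n : N j) : tmulAt fM fN fT hik hjk m n = tmulAt fM fN fT hik' hjk' m n := by
  obtain ⟨l, hkl, hk'l⟩ := exists_ge_ge k k'
  simp only [tmulAt_apply, ← of_f (f := fT) hkl, ← of_f (f := fT) hk'l, hT,
    DirectedSystem.map_map (f := fun i j h => fM i j h),
    DirectedSystem.map_map (f := fun i j h => fN i j h)]

noncomputable def limitTmul : M∞ →+ N∞ →+ T∞ :=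
  lift₂ (fun i j => tmulAt fM fN fT (le_ub_left i j) (le_ub_right i j))
    (fun _ _ _ h m n => (tmulAt_map_left h _ _ m n).trans (tmulAt_eq hT _ _ _ _ m n))
    (fun _ _ _ h m n => (tmulAt_map_right h _ _ m n).trans (tmulAt_eq hT _ _ _ _ m n))

theorem limitTmul_of_of {i j k : ι} (hi : i ≤ k) (hj : j ≤ k) (m : M i) (n : N j) :
    limitTmul hT (of M fM i m) (of N fN j n) = of _ fT k (fM i k hi m ⊗ₜ fN j k hj n) := by
  rw [limitTmul, lift₂_of_of, tmulAt_eq hT _ _ hi hj, tmulAt_apply]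

theorem limitTmul_of_of_self (i : ι) (m : M i) (n : N i) :
    limitTmul hT (of M fM i m) (of N fN i n) = of _ fT i (m ⊗ₜ n) := by
  rw [limitTmul_of_of hT le_rfl le_rfl, DirectedSystem.map_self (f := fun i j h => fM i j h),
    DirectedSystem.map_self (f := fun i j h => fN i j h)]

end Semiring

section Ring

variable {ι : Type*} [Preorder ι] [DecidableEq ι]
  {R : ι → Type*} [∀ i, CommRing (R i)] {fR : ∀ i j, i ≤ j → R i →+* R j}
  {M N : ι → Type*} [∀ i, AddCommMonoid (M i)] [∀ i, AddCommMonoid (N i)]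
  [∀ i, Module (R i) (M i)] [∀ i, Module (R i) (N i)]
  {fM : ∀ i j, i ≤ j → M i →+ M j} {fN : ∀ i j, i ≤ j → N i →+ N j}
  {fT : ∀ i j, i ≤ j → M i ⊗[R i] N i →+ M j ⊗[R j] N j}

local notation "S" => Ring.DirectLimit R fun i j h => fR i j h
local notation "T∞" => AddCommGroup.DirectLimit (fun i => M i ⊗[R i] N i) fT
local notation "M∞" => AddCommGroup.DirectLimit M fM
local notation "N∞" => AddCommGroup.DirectLimit N fN

variable [Module (Ring.DirectLimit R fun i j h => fR i j h) (AddCommGroup.DirectLimit M fM)]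
  [Module (Ring.DirectLimit R fun i j h => fR i j h) (AddCommGroup.DirectLimit N fN)]
  (hSM : ∀ i (r : R i) (m : M i),
    Ring.DirectLimit.of R (fun i j h => fR i j h) i r • of M fM i m = of M fM i (r • m))
  (hSN : ∀ i (r : R i) (n : N i),
    Ring.DirectLimit.of R (fun i j h => fR i j h) i r • of N fN i n = of N fN i (r • n))

noncomputable def toTensorComponent (i : ι) : M i ⊗[R i] N i →+ M∞ ⊗[S] N∞ :=
  liftAddHom (tmulHom S (of M fM i) (of N fN i)) fun r m n => by
    simp only [tmulHom_apply, ← hSM, ← hSN, smul_tmul]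

theorem toTensorComponent_tmul (i : ι) (m : M i) (n : N i) :
    toTensorComponent hSM hSN i (m ⊗ₜ n) = of M fM i m ⊗ₜ of N fN i n := rfl

variable (hT : ∀ i j (h : i ≤ j) (m : M i) (n : N i), fT i j h (m ⊗ₜ n) = fM i j h m ⊗ₜ fN i j h n)

noncomputable def toTensor : T∞ →+ M∞ ⊗[S] N∞ :=
  lift _ fT _ (toTensorComponent hSM hSN) fun i j h t => by
    induction t using TensorProduct.induction_on with
    | zero => simp only [map_zero]
    | tmul m n => rw [hT, toTensorComponent_tmul, toTensorComponent_tmul, of_f, of_f]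
    | add a b ha hb => simp only [map_add, ha, hb]

theorem toTensor_of_tmul (i : ι) (m : M i) (n : N i) :
    toTensor hSM hSN hT (of _ fT i (m ⊗ₜ n)) = of M fM i m ⊗ₜ of N fN i n :=
  lift_of ..

variable [IsDirectedOrder ι] [Nonempty ι]
  [DirectedSystem M fun i j h => fM i j h] [DirectedSystem N fun i j h => fN i j h]

include hSM hSN in
theorem limitTmul_smul (s : S) (x : M∞) (y : N∞) :
    limitTmul hT (s • x) y = limitTmul hT x (s • y) := by
  induction s using Ring.DirectLimit.induction_on with | ih i₀ r => ?_
  induction x using AddCommGroup.DirectLimit.induction_on with | ih i m => ?_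
  induction y using AddCommGroup.DirectLimit.induction_on with | ih j n => ?_
  obtain ⟨k, hi₀k, hk⟩ := exists_ge_ge i₀ (ub i j)
  have hik := (le_ub_left i j).trans hk
  have hjk := (le_ub_right i j).trans hk
  rw [← Ring.DirectLimit.of_f hi₀k r, ← of_f hik m, ← of_f hjk n, hSM, hSN,
    limitTmul_of_of_self, limitTmul_of_of_self, smul_tmul]

noncomputable def fromTensor : M∞ ⊗[S] N∞ →+ T∞ :=
  liftAddHom (limitTmul hT) (limitTmul_smul hSM hSN hT)

theorem fromTensor_toTensor (z : T∞) : fromTensor hSM hSN hT (toTensor hSM hSN hT z) = z := by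
  induction z using AddCommGroup.DirectLimit.induction_on with | ih i t => ?_
  induction t using TensorProduct.induction_on with
  | zero => simp only [map_zero]
  | tmul m n => rw [toTensor_of_tmul, fromTensor, liftAddHom_tmul, limitTmul_of_of_self]
  | add a b ha hb => simp only [map_add, ha, hb]

theorem toTensor_fromTensor (w : M∞ ⊗[S] N∞) :
    toTensor hSM hSN hT (fromTensor hSM hSN hT w) = w := by
  induction w using TensorProduct.induction_on with
  | zero => simp only [map_zero]
  | tmul x y =>
    induction x using AddCommGroup.DirectLimit.induction_on with | ih i m => ?_
    induction y using AddCommGroup.DirectLimit.induction_on with | ih j n => ?_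
    rw [← of_f (le_ub_left i j) m, ← of_f (le_ub_right i j) n, fromTensor, liftAddHom_tmul,
      limitTmul_of_of_self, toTensor_of_tmul]
  | add a b ha hb => simp only [map_add, ha, hb]

noncomputable def tensorEquiv : T∞ ≃+ M∞ ⊗[S] N∞ where
  toFun := toTensor hSM hSN hT
  invFun := fromTensor hSM hSN hT
  left_inv := fromTensor_toTensor hSM hSN hT
  right_inv := toTensor_fromTensor hSM hSN hT
  map_add' := map_add _

theorem tensorEquiv_of_tmul (i : ι) (m : M i) (n : N i) :
    tensorEquiv hSM hSN hT (of _ fT i (m ⊗ₜ n)) = of M fM i m ⊗ₜ of N fN i n :=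
  toTensor_of_tmul hSM hSN hT i m n

end Ring

end DirectLimitTensorProduct

theorem directLimit_tensorProduct_general {ι : Type*} [Preorder ι] [IsDirected ι (· ≤ ·)]
    [DecidableEq ι] [Nonempty ι]
    (R : ι → Type*) [∀ i, CommRing (R i)]
    (M N : ι → Type*) [∀ i, AddCommGroup (M i)] [∀ i, AddCommGroup (N i)]
    [∀ i, Module (R i) (M i)] [∀ i, Module (R i) (N i)]
    (fR : ∀ i j, i ≤ j → R i →+* R j)
    (fM : ∀ i j, i ≤ j → M i →+ M j) (fN : ∀ i j, i ≤ j → N i →+ N j)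
    (fT : ∀ i j, i ≤ j →
      (TensorProduct (R i) (M i) (N i)) →+ TensorProduct (R j) (M j) (N j))
    [DirectedSystem M fun i j h => fM i j h]
    [DirectedSystem N fun i j h => fN i j h]
    (hT : ∀ i j (h : i ≤ j) (m : M i) (n : N i),
      fT i j h (m ⊗ₜ[R i] n) = fM i j h m ⊗ₜ[R j] fN i j h n)
    [instMM : Module (Ring.DirectLimit R fun i j h => fR i j h)
      (AddCommGroup.DirectLimit M fM)]
    [instNN : Module (Ring.DirectLimit R fun i j h => fR i j h)
      (AddCommGroup.DirectLimit N fN)]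
    (hSM : ∀ i (r : R i) (m : M i),
      Ring.DirectLimit.of R (fun i j h => fR i j h) i r •
          AddCommGroup.DirectLimit.of M fM i m =
        AddCommGroup.DirectLimit.of M fM i (r • m))
    (hSN : ∀ i (r : R i) (n : N i),
      Ring.DirectLimit.of R (fun i j h => fR i j h) i r •
          AddCommGroup.DirectLimit.of N fN i n =
        AddCommGroup.DirectLimit.of N fN i (r • n)) :
    ∃ eIso : AddCommGroup.DirectLimit (fun i => TensorProduct (R i) (M i) (N i)) fT ≃+
        TensorProduct (Ring.DirectLimit R fun i j h => fR i j h)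
          (AddCommGroup.DirectLimit M fM) (AddCommGroup.DirectLimit N fN),
      ∀ i (m : M i) (n : N i),
        eIso (AddCommGroup.DirectLimit.of
            (fun i => TensorProduct (R i) (M i) (N i)) fT i (m ⊗ₜ[R i] n)) =
          AddCommGroup.DirectLimit.of M fM i m ⊗ₜ AddCommGroup.DirectLimit.of N fN i n :=
  ⟨DirectLimitTensorProduct.tensorEquiv hSM hSN hT,
    DirectLimitTensorProduct.tensorEquiv_of_tmul hSM hSN hT⟩

/-- Let `I` be a directed index set, `(R_i)` a directed system of commutative rings,
and `(M_i)`, `(N_i)` directed systems of modules over them (the module transition maps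
being additive and semilinear over the ring transition maps); let `(M_i ⊗_{R_i} N_i)`
be the induced directed system of tensor products.  Let `S = colim R_i` and let the
colimits `colim M_i`, `colim N_i` carry their canonical `S`-module structures
(characterized by compatibility with the structural maps).  Then there is a natural
isomorphism `colim (M_i ⊗_{R_i} N_i) ≅ (colim M_i) ⊗_S (colim N_i)`, compatible with
the canonical maps from the components. -/
theorem directLimit_tensorProduct {ι : Type*} [Preorder ι] [IsDirected ι (· ≤ ·)]
    [DecidableEq ι] [Nonempty ι]
    (R : ι → Type*) [∀ i, CommRing (R i)]
    (M N : ι → Type*) [∀ i, AddCommGroup (M i)] [∀ i, AddCommGroup (N i)]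
    [∀ i, Module (R i) (M i)] [∀ i, Module (R i) (N i)]
    (fR : ∀ i j, i ≤ j → R i →+* R j)
    (fM : ∀ i j, i ≤ j → M i →+ M j) (fN : ∀ i j, i ≤ j → N i →+ N j)
    (fT : ∀ i j, i ≤ j →
      (TensorProduct (R i) (M i) (N i)) →+ TensorProduct (R j) (M j) (N j))
    [DirectedSystem R fun i j h => fR i j h]
    [DirectedSystem M fun i j h => fM i j h]
    [DirectedSystem N fun i j h => fN i j h]
    [DirectedSystem (fun i => TensorProduct (R i) (M i) (N i)) fun i j h => fT i j h]
    (hM : ∀ i j (h : i ≤ j) (r : R i) (m : M i),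
      fM i j h (r • m) = fR i j h r • fM i j h m)
    (hN : ∀ i j (h : i ≤ j) (r : R i) (n : N i),
      fN i j h (r • n) = fR i j h r • fN i j h n)
    (hT : ∀ i j (h : i ≤ j) (m : M i) (n : N i),
      fT i j h (m ⊗ₜ[R i] n) = fM i j h m ⊗ₜ[R j] fN i j h n)
    [instMM : Module (Ring.DirectLimit R fun i j h => fR i j h)
      (AddCommGroup.DirectLimit M fM)]
    [instNN : Module (Ring.DirectLimit R fun i j h => fR i j h)
      (AddCommGroup.DirectLimit N fN)]
    (hSM : ∀ i (r : R i) (m : M i),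
      Ring.DirectLimit.of R (fun i j h => fR i j h) i r •
          AddCommGroup.DirectLimit.of M fM i m =
        AddCommGroup.DirectLimit.of M fM i (r • m))
    (hSN : ∀ i (r : R i) (n : N i),
      Ring.DirectLimit.of R (fun i j h => fR i j h) i r •
          AddCommGroup.DirectLimit.of N fN i n =
        AddCommGroup.DirectLimit.of N fN i (r • n)) :
    ∃ eIso : AddCommGroup.DirectLimit (fun i => TensorProduct (R i) (M i) (N i)) fT ≃+
        TensorProduct (Ring.DirectLimit R fun i j h => fR i j h)
          (AddCommGroup.DirectLimit M fM) (AddCommGroup.DirectLimit N fN),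
      ∀ i (m : M i) (n : N i),
        eIso (AddCommGroup.DirectLimit.of
            (fun i => TensorProduct (R i) (M i) (N i)) fT i (m ⊗ₜ[R i] n)) =
          AddCommGroup.DirectLimit.of M fM i m ⊗ₜ AddCommGroup.DirectLimit.of N fN i n :=
  directLimit_tensorProduct_general R M N fR fM fN fT hT (instMM := instMM) (instNN := instNN) hSM
    hSN
end

section
/- Let R be a Noetherian ring of characteristic p, M a finitely generated R-module with a surjective additive map κ: M → M satisfying κ(r^p m) = r κ(m) (an F-pure Cartier module), t ∈ Q_{≥0}, and f ∈ R a nonzerodivisor on M. Then for every l ≥ 0, κ^e(f^{⌈t p^e⌉} f^l M) ⊆ κ^{e+1}(f^{⌈t p^{e+1}⌉} f^l M) for all e, and this ascending chain of submodules stabilizes for e ≫ 0. -/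
/-!
Write `a e = ⌈t p^e⌉₊`. Since `a (e+1) ≤ p * a e`, the element `f^{a(e+1)+l}` divides
`(f^{a e + l})^p`; as `κ` is surjective, every `m = κ m'` gives
`κ^e(f^{a e + l} κ m') = κ^{e+1}((f^{a e + l})^p m')`, which lies in
`κ^{e+1}(f^{a(e+1)+l} M)`. The Cartier rule makes each of these sets an `R`-submodule,
so the ascending chain stabilizes because `M` is a Noetherian module.
-/

theorem Nat.ceil_natCast_mul_le {α : Type*} [Semiring α] [LinearOrder α] [IsOrderedRing α]
    [FloorSemiring α] (n : ℕ) (x : α) : ⌈(n : α) * x⌉₊ ≤ n * ⌈x⌉₊ := by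
  rw [Nat.ceil_le, Nat.cast_mul]
  exact mul_le_mul_of_nonneg_left (Nat.le_ceil x) (Nat.cast_nonneg n)

namespace CartierMap

variable {R M : Type*} {p : ℕ}

theorem iterate_pow_smul [Monoid R] [MulAction R M] {κ : M → M}
    (hκ : ∀ (r : R) (m : M), κ (r ^ p • m) = r • κ m) (e : ℕ) (r : R) (m : M) :
    κ^[e] (r ^ p ^ e • m) = r • κ^[e] m := by
  induction e generalizing r m with
  | zero => simp
  | succ e ih => rw [Function.iterate_succ_apply, Function.iterate_succ_apply, pow_succ,
      pow_mul, hκ, ih]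

theorem range_iterate_smul_subset_succ [CommMonoid R] [MulAction R M] {κ : M → M}
    (hκ : ∀ (r : R) (m : M), κ (r ^ p • m) = r • κ m) (hsurj : Function.Surjective κ)
    {c d : R} (hdc : d ∣ c ^ p) (e : ℕ) :
    Set.range (fun m : M => κ^[e] (c • m)) ⊆ Set.range (fun m : M => κ^[e + 1] (d • m)) := by
  rintro _ ⟨m, rfl⟩
  obtain ⟨m', rfl⟩ := hsurj m
  obtain ⟨q, hq⟩ := hdc
  refine ⟨q • m', ?_⟩
  simp only [Function.iterate_succ_apply, smul_smul, ← hq, hκ]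

/-- The set `κ^e(c M)`, an `R`-submodule thanks to the Cartier rule `κ^e(r^{p^e} m) = r κ^e(m)`. -/
def iterateSMulRange [CommRing R] [AddCommGroup M] [Module R M] (κ : M →+ M)
    (hκ : ∀ (r : R) (m : M), κ (r ^ p • m) = r • κ m) (e : ℕ) (c : R) : Submodule R M where
  carrier := Set.range (fun m : M => (⇑κ)^[e] (c • m))
  add_mem' := by
    rintro _ _ ⟨m₁, rfl⟩ ⟨m₂, rfl⟩
    exact ⟨m₁ + m₂, by simp only [smul_add, iterate_map_add]⟩
  zero_mem' := ⟨0, by simp only [smul_zero, iterate_map_zero]⟩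
  smul_mem' := by
    rintro r _ ⟨m, rfl⟩
    exact ⟨r ^ p ^ e • m, by simp only [smul_comm c, iterate_pow_smul hκ]⟩

end CartierMap

open CartierMap in
theorem cartier_iterate_ascending_chain_general (R : Type*) [CommRing R] [IsNoetherianRing R]
    (p : ℕ) [Fact p.Prime]
    (M : Type*) [AddCommGroup M] [Module R M] [Module.Finite R M]
    (κ : M →+ M) (hκ : ∀ (r : R) (m : M), κ (r ^ p • m) = r • κ m)
    (hsurj : Function.Surjective κ)
    (t : ℚ) (f : R) (l : ℕ) :
    (∀ e : ℕ,
        Set.range (fun m : M => (⇑κ)^[e] ((f ^ (⌈t * (p : ℚ) ^ e⌉₊) * f ^ l) • m)) ⊆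
          Set.range (fun m : M => (⇑κ)^[e + 1] ((f ^ (⌈t * (p : ℚ) ^ (e + 1)⌉₊) * f ^ l) • m))) ∧
      ∃ e₀ : ℕ, ∀ e ≥ e₀,
        Set.range (fun m : M => (⇑κ)^[e] ((f ^ (⌈t * (p : ℚ) ^ e⌉₊) * f ^ l) • m)) =
          Set.range (fun m : M => (⇑κ)^[e₀] ((f ^ (⌈t * (p : ℚ) ^ e₀⌉₊) * f ^ l) • m)) := by
  set a : ℕ → ℕ := fun e => ⌈t * (p : ℚ) ^ e⌉₊
  have ha : ∀ e, a (e + 1) + l ≤ p * (a e + l) := fun e => by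
    have hceil : a (e + 1) ≤ p * a e := by
      simpa only [a, pow_succ', mul_left_comm t] using Nat.ceil_natCast_mul_le p (t * (p : ℚ) ^ e)
    nlinarith [(Fact.out : p.Prime).one_le]
  let S : ℕ → Submodule R M := fun e => iterateSMulRange κ hκ e (f ^ a e * f ^ l)
  have hS : ∀ e, S e ≤ S (e + 1) := fun e => by
    have hdvd : f ^ a (e + 1) * f ^ l ∣ (f ^ a e * f ^ l) ^ p := by
      simpa only [← pow_add, ← pow_mul'] using pow_dvd_pow f (ha e)
    exact range_iterate_smul_subset_succ hκ hsurj hdvd e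
  obtain ⟨e₀, he₀⟩ := monotone_stabilizes_iff_noetherian.mpr inferInstance
    ⟨S, monotone_nat_of_le_succ hS⟩
  exact ⟨hS, e₀, fun e he => congrArg SetLike.coe (he₀ e he).symm⟩

/-- Let `R` be a Noetherian ring of characteristic `p`, `M` a finitely generated
`R`-module and `κ : M → M` a surjective additive map with `κ(r^p • m) = r • κ(m)`
(an `F`-pure Cartier module).  Let `t ∈ ℚ_{≥0}` and `f ∈ R` a nonzerodivisor on `M`.
Then for every `l ≥ 0` the submodules `κ^e(f^{⌈t p^e⌉} f^l M)` form an ascending chain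
in `e`, which stabilizes for `e ≫ 0`. -/
theorem cartier_iterate_ascending_chain (R : Type*) [CommRing R] [IsNoetherianRing R]
    (p : ℕ) [Fact p.Prime] [CharP R p]
    (M : Type*) [AddCommGroup M] [Module R M] [Module.Finite R M]
    (κ : M →+ M) (hκ : ∀ (r : R) (m : M), κ (r ^ p • m) = r • κ m)
    (hsurj : Function.Surjective κ)
    (t : ℚ) (ht : 0 ≤ t) (f : R) (hf : ∀ m : M, f • m = 0 → m = 0) (l : ℕ) :
    (∀ e : ℕ,
        Set.range (fun m : M => (⇑κ)^[e] ((f ^ (⌈t * (p : ℚ) ^ e⌉₊) * f ^ l) • m)) ⊆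
          Set.range (fun m : M => (⇑κ)^[e + 1] ((f ^ (⌈t * (p : ℚ) ^ (e + 1)⌉₊) * f ^ l) • m))) ∧
      ∃ e₀ : ℕ, ∀ e ≥ e₀,
        Set.range (fun m : M => (⇑κ)^[e] ((f ^ (⌈t * (p : ℚ) ^ e⌉₊) * f ^ l) • m)) =
          Set.range (fun m : M => (⇑κ)^[e₀] ((f ^ (⌈t * (p : ℚ) ^ e₀⌉₊) * f ^ l) • m)) :=
  cartier_iterate_ascending_chain_general R p M κ hκ hsurj t f l
end
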